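/- For symmetric positive definite matrices S and P₀ with tr(S) = τ and tr(P₀) = τ₀, one has tr((P₀^{1/2} S P₀^{1/2})^{1/2}) ≤ √(τ τ₀), with equality when S = (τ/τ₀) P₀. -/

import Mathlib

/-!
Write `Q = P₀^{1/2}` and `T = (Q S Q)^{1/2}`. The matrix `X = Q⁻¹ T` satisfies
`X Xᵀ = Q⁻¹ T² Q⁻¹ = S` and `tr (X Qᵀ) = tr (Q⁻¹ T Q) = tr T`, so Cauchy–Schwarz for the
Frobenius inner product gives `(tr T)² ≤ tr (X Xᵀ) · tr (Q Qᵀ) = tr S · tr P₀`.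
If `S = c P₀` with `c ≥ 0`, then `Q S Q = c P₀²`, whose positive square root is `√c P₀`.
-/

open Matrix

section

open scoped ComplexOrder

noncomputable def Matrix.PosSemidef.sqrt {n : Type*} [Fintype n] [DecidableEq n] {𝕜 : Type*}
    [RCLike 𝕜] {A : Matrix n n 𝕜} (hA : A.PosSemidef) : Matrix n n 𝕜 :=
  hA.1.eigenvectorUnitary.1 * diagonal ((↑) ∘ (√·) ∘ hA.1.eigenvalues) *
    (star hA.1.eigenvectorUnitary : Matrix n n 𝕜)

end

namespace Matrix

section Sqrt

open scoped ComplexOrder MatrixOrder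

variable {n 𝕜 : Type*} [Fintype n] [DecidableEq n] [RCLike 𝕜] {A B : Matrix n n 𝕜}

lemma PosSemidef.sqrt_eq_cfc (hA : A.PosSemidef) : hA.sqrt = cfc Real.sqrt A := by
  rw [hA.1.cfc_eq, IsHermitian.cfc, Unitary.conjStarAlgAut_apply]; rfl

lemma PosSemidef.posSemidef_sqrt (hA : A.PosSemidef) : hA.sqrt.PosSemidef := by
  rw [hA.sqrt_eq_cfc, ← nonneg_iff_posSemidef]
  exact cfc_nonneg fun x _ ↦ Real.sqrt_nonneg x

lemma PosSemidef.sqrt_mul_self (hA : A.PosSemidef) : hA.sqrt * hA.sqrt = A := by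
  have hA' : IsSelfAdjoint A := hA.1
  rw [hA.sqrt_eq_cfc, ← cfc_mul Real.sqrt Real.sqrt A]
  calc cfc (fun x ↦ √x * √x) A = cfc id A :=
        cfc_congr fun x hx ↦ Real.mul_self_sqrt (spectrum_nonneg_of_nonneg hA.nonneg hx)
    _ = A := cfc_id ℝ A

lemma PosSemidef.sqrt_eq_of_mul_self_eq (hA : A.PosSemidef) (hB : B.PosSemidef)
    (h : B * B = A) : hA.sqrt = B := by
  have hB' : IsSelfAdjoint B := hB.1
  rw [hA.sqrt_eq_cfc, ← h, ← sq, ← cfc_comp_pow Real.sqrt 2 B]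
  calc cfc (Real.sqrt ∘ (· ^ 2)) B = cfc id B :=
        cfc_congr fun x hx ↦ Real.sqrt_sq (spectrum_nonneg_of_nonneg hB.nonneg hx)
    _ = B := cfc_id ℝ B

lemma PosDef.isUnit_sqrt (hA : A.PosDef) : IsUnit hA.posSemidef.sqrt :=
  isUnit_of_mul_isUnit_left (hA.posSemidef.sqrt_mul_self ▸ hA.isUnit)

lemma PosSemidef.sqrt_conj_smul_self (hA : A.PosSemidef) {c : ℝ} (hc : 0 ≤ c)
    (h : (hA.sqrt * (c • A) * hA.sqrt).PosSemidef) : h.sqrt = √c • A := by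
  refine h.sqrt_eq_of_mul_self_eq (hA.smul (Real.sqrt_nonneg c)) ?_
  rw [smul_mul_smul_comm, ← sq, Real.sq_sqrt hc, mul_smul_comm, smul_mul_assoc]
  have hQQ := hA.sqrt_mul_self
  generalize hA.sqrt = Q at hQQ ⊢
  subst hQQ
  simp only [mul_assoc]

end Sqrt

lemma trace_mul_transpose_sq_le {m n R : Type*} [Fintype m] [Fintype n] [CommRing R]
    [LinearOrder R] [IsStrictOrderedRing R] (A B : Matrix m n R) :
    (A * Bᵀ).trace ^ 2 ≤ (A * Aᵀ).trace * (B * Bᵀ).trace := by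
  have trace_eq (X Y : Matrix m n R) : (X * Yᵀ).trace = ∑ p : m × n, X p.1 p.2 * Y p.1 p.2 := by
    simp [trace, mul_apply, Fintype.sum_prod_type]
  simpa only [trace_eq, sq] using Finset.sum_mul_sq_le_sq_mul_sq Finset.univ
    (fun p : m × n ↦ A p.1 p.2) (fun p ↦ B p.1 p.2)

lemma PosDef.trace_sqrt_conj_sq_le {n : Type*} [Fintype n] [DecidableEq n] {P S : Matrix n n ℝ}
    (hP : P.PosDef) (h : (hP.posSemidef.sqrt * S * hP.posSemidef.sqrt).PosSemidef) :
    h.sqrt.trace ^ 2 ≤ S.trace * P.trace := by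
  have hT : h.sqrtᵀ = h.sqrt := h.posSemidef_sqrt.1
  have hTT := h.sqrt_mul_self
  have hQ : hP.posSemidef.sqrtᵀ = hP.posSemidef.sqrt := hP.posSemidef.posSemidef_sqrt.1
  have hQQ := hP.posSemidef.sqrt_mul_self
  have hQdet := (isUnit_iff_isUnit_det _).1 hP.isUnit_sqrt
  generalize h.sqrt = T at hT hTT ⊢
  generalize hP.posSemidef.sqrt = Q at hQ hQQ hQdet hTT
  have hXX : Q⁻¹ * T * (Q⁻¹ * T)ᵀ = S := by
    rw [transpose_mul, hT, transpose_nonsing_inv, hQ,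
      show Q⁻¹ * T * (T * Q⁻¹) = Q⁻¹ * (T * T) * Q⁻¹ by simp only [mul_assoc], hTT]
    simp only [← mul_assoc, nonsing_inv_mul _ hQdet, one_mul,
      mul_nonsing_inv_cancel_right _ _ hQdet]
  have hXQ : (Q⁻¹ * T * Qᵀ).trace = T.trace := by
    rw [hQ, trace_mul_cycle, mul_nonsing_inv _ hQdet, one_mul]
  calc T.trace ^ 2 = (Q⁻¹ * T * Qᵀ).trace ^ 2 := by rw [hXQ]
    _ ≤ (Q⁻¹ * T * (Q⁻¹ * T)ᵀ).trace * (Q * Qᵀ).trace := trace_mul_transpose_sq_le _ Q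
    _ = S.trace * P.trace := by rw [hXX, hQ, hQQ]

end Matrix

lemma Real.sqrt_div_mul_self (x : ℝ) {y : ℝ} (hy : 0 ≤ y) : √(x / y) * y = √(x * y) := by
  rw [← Real.sqrt_sq hy, ← Real.sqrt_mul' _ (sq_nonneg y), Real.sqrt_sq hy]
  rcases hy.eq_or_lt with rfl | hy
  · simp
  · field_simp

/-- For SPD `S, P₀` with `tr S = τ`, `tr P₀ = τ₀`:
`tr((P₀^{1/2} S P₀^{1/2})^{1/2}) ≤ √(τ τ₀)`, with equality when `S = (τ/τ₀) P₀`. -/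
theorem stmt4 {n : ℕ} (S P₀ : Matrix (Fin n) (Fin n) ℝ)
    (hS : S.PosDef) (hP₀ : P₀.PosDef) (τ τ₀ : ℝ)
    (hτ : S.trace = τ) (hτ₀ : P₀.trace = τ₀)
    (hmid : (hP₀.posSemidef.sqrt * S * hP₀.posSemidef.sqrt).PosSemidef) :
    hmid.sqrt.trace ≤ Real.sqrt (τ * τ₀) ∧
      (S = (τ / τ₀) • P₀ → hmid.sqrt.trace = Real.sqrt (τ * τ₀)) := by
  have hτ_nonneg : 0 ≤ τ := hτ ▸ hS.posSemidef.trace_nonneg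
  have hτ₀_nonneg : 0 ≤ τ₀ := hτ₀ ▸ hP₀.posSemidef.trace_nonneg
  refine ⟨Real.le_sqrt_of_sq_le ?_, fun hSP ↦ ?_⟩
  · simpa only [hτ, hτ₀] using hP₀.trace_sqrt_conj_sq_le hmid
  · subst hSP
    rw [hP₀.posSemidef.sqrt_conj_smul_self (div_nonneg hτ_nonneg hτ₀_nonneg) hmid, trace_smul,
      hτ₀, smul_eq_mul, Real.sqrt_div_mul_self _ hτ₀_nonneg]
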